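/- (Theorem 2.) Let g₁,…,g_m ∈ ℝ[x₁,…,xₙ] be nonzero polynomials with deg(g_i) ≤ 2d, let K = {x ∈ ℝⁿ : g₁(x) ≥ 0, …, g_m(x) ≥ 0} have nonempty interior, and let f ∈ ℝ[x₁,…,xₙ] with deg(f) ≤ 2d. If ε > ‖vec(f − θ_d)‖ where θ_d = Σ_{α ∈ ℕⁿ_d} x^{2α}, then: (i) the moment relaxation — minimize ⟨f,y⟩ + ε‖y‖ over tms y of degree 2d with y₀ = 1, M_d[y] ⪰ 0 and L_{g_i}^{(d)}[y] ⪰ 0 for all i — attains its infimum at some feasible y*; (ii) the dual SOS program — maximize γ over γ ∈ ℝ and p ∈ ℝ[x]_{2d} subject to ‖vec(p)‖ ≤ ε and f − p − γ ∈ Q(g)_{2d} — attains its supremum; and (iii) the two optimal values are equal. -/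

import Mathlib

open MvPolynomial Finset

/-- The set `ℕⁿ_d` of multi-indices `α ∈ ℕⁿ` with `|α| = α₁ + ⋯ + αₙ ≤ d`. -/
abbrev MIdx (n d : ℕ) : Type := {α : Fin n →₀ ℕ // ∑ i, α i ≤ d}

noncomputable instance MIdx.fintype (n d : ℕ) : Fintype (MIdx n d) := by
  have hfin : {f : Fin n → ℕ | ∑ i, f i ≤ d}.Finite := by
    apply (Set.finite_Icc (0 : Fin n → ℕ) (fun _ => d)).subset
    intro f hf
    refine Set.mem_Icc.mpr ⟨fun i => Nat.zero_le _, fun i => ?_⟩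
    exact le_trans (Finset.single_le_sum (fun j _ => Nat.zero_le (f j)) (Finset.mem_univ i)) hf
  have h2 : {α : Fin n →₀ ℕ | ∑ i, α i ≤ d}.Finite :=
    Set.Finite.preimage (Set.injOn_of_injective (DFunLike.coe_injective (F := Fin n →₀ ℕ))) hfin
  exact h2.fintype

/-- The moment matrix `M_d[y]` of a truncated multi-sequence `y` of degree `2d`,
indexed by `α, β ∈ ℕⁿ_d`, with entries `y_{α+β}`. -/
noncomputable def momMat {n : ℕ} (d : ℕ) (y : MIdx n (2 * d) → ℝ) :
    Matrix (MIdx n d) (MIdx n d) ℝ := fun α β =>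
  y ⟨α.1 + β.1, by
    have hα := α.2; have hβ := β.2
    have h : ∑ i, (α.1 + β.1) i = (∑ i, α.1 i) + ∑ i, β.1 i := by
      simp [Finsupp.add_apply, Finset.sum_add_distrib]
    omega⟩

/-- The localizing matrix `L_p^{(d)}[y]` of a polynomial `p` of degree ≤ 2d at a tms `y`
of degree `2d`, indexed by `α, β ∈ ℕⁿ_t` with `t = d - ⌈deg(p)/2⌉`, with entries
`Σ_γ p_γ y_{α+β+γ}`. -/
noncomputable def locMat {n : ℕ} (d : ℕ) (p : MvPolynomial (Fin n) ℝ)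
    (hp : p.totalDegree ≤ 2 * d) (y : MIdx n (2 * d) → ℝ) :
    Matrix (MIdx n (d - (p.totalDegree + 1) / 2))
      (MIdx n (d - (p.totalDegree + 1) / 2)) ℝ := fun α β =>
  ∑ γ ∈ p.support.attach, p.coeff γ.1 *
    y ⟨α.1 + β.1 + γ.1, by
      have hα := α.2; have hβ := β.2
      have hγ : ∑ i, γ.1 i ≤ p.totalDegree := by
        have h1 := MvPolynomial.le_totalDegree γ.2
        have h2 : (γ.1.sum fun _ e => e) = ∑ i, γ.1 i :=
          Finsupp.sum_fintype _ _ (fun _ => rfl)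
        omega
      have h : ∑ i, (α.1 + β.1 + γ.1) i = ((∑ i, α.1 i) + ∑ i, β.1 i) + ∑ i, γ.1 i := by
        simp [Finsupp.add_apply, Finset.sum_add_distrib]
      omega⟩

/-- The Riesz functional `⟨f, y⟩ = Σ_{α ∈ ℕⁿ_{2d}} f_α y_α`. -/
noncomputable def riesz {n : ℕ} (d : ℕ) (f : MvPolynomial (Fin n) ℝ)
    (y : MIdx n (2 * d) → ℝ) : ℝ :=
  ∑ α : MIdx n (2 * d), f.coeff α.1 * y α

/-- The Euclidean norm of a truncated multi-sequence. -/
noncomputable def tmsNorm {n d : ℕ} (y : MIdx n d → ℝ) : ℝ :=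
  Real.sqrt (∑ α, (y α) ^ 2)

/-- The vector of monomials `[x]_d = (x^α)_{α ∈ ℕⁿ_d}` evaluated at `x`. -/
noncomputable def monVec {n : ℕ} (d : ℕ) (x : Fin n → ℝ) : MIdx n d → ℝ :=
  fun α => ∏ i, x i ^ α.1 i

/-- The coefficient vector `vec(p) ∈ ℝ^{ℕⁿ_{2d}}` of a polynomial `p ∈ ℝ[x]_{2d}`. -/
noncomputable def vecPoly {n : ℕ} (d : ℕ) (p : MvPolynomial (Fin n) ℝ) :
    MIdx n (2 * d) → ℝ := fun α => p.coeff α.1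

/-- `σ` is a sum of squares of polynomials of degree at most `k`. -/
def IsSOSDeg {n : ℕ} (k : ℕ) (σ : MvPolynomial (Fin n) ℝ) : Prop :=
  ∃ (r : ℕ) (s : Fin r → MvPolynomial (Fin n) ℝ),
    (∀ j, (s j).totalDegree ≤ k) ∧ σ = ∑ j, (s j) ^ 2

/-- Membership in the truncated quadratic module `Q(g)_{2d}`. -/
def memQ {n m : ℕ} (d : ℕ) (g : Fin m → MvPolynomial (Fin n) ℝ)
    (q : MvPolynomial (Fin n) ℝ) : Prop :=
  ∃ (σ₀ : MvPolynomial (Fin n) ℝ) (σ : Fin m → MvPolynomial (Fin n) ℝ),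
    IsSOSDeg d σ₀ ∧ (∀ i, IsSOSDeg (d - ((g i).totalDegree + 1) / 2) (σ i)) ∧
    q = σ₀ + ∑ i, g i * σ i

/-! The moment relaxation is coercive: `θ_d` is a sum of squares, so `⟨θ_d, y⟩ ≥ 0` whenever
`M_d[y] ⪰ 0`, and Cauchy–Schwarz gives `⟨f, y⟩ + ε‖y‖ ≥ (ε - ‖vec(f - θ_d)‖) ‖y‖`. As `[x]_{2d}`
is feasible for any `x ∈ K`, the minimum is attained. Weak duality is the nonnegativity of
feasible `y` on `Q(g)_{2d}`.

For the converse let `v` be the optimal value. The coefficient vectors of `Q(g)_{2d}` are the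
image of a product of PSD cones of Gram matrices under a linear map which, since `K` has
interior, vanishes on the cone only at `0`; so this image is closed, and so is its sum with the
`ε`-ball. If `vec(f - v)` were outside that sum, a separating hyperplane would give a tms `z`,
nonnegative on `Q(g)_{2d}`, with `⟨f, z⟩ + ε‖z‖ < v z₀`, contradicting optimality after
rescaling (`z₀ > 0`) or coercivity (`z₀ = 0`). Membership in the sum is a dual feasible point
of value `v`. -/

section

open Pointwise
open scoped Matrix

variable {n : ℕ}

section Coefficients

lemma sum_add_apply (α β : Fin n →₀ ℕ) : ∑ i, (α + β) i = ∑ i, α i + ∑ i, β i := by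
  simp only [Finsupp.coe_add, Pi.add_apply, Finset.sum_add_distrib]

lemma sum_le_totalDegree {p : MvPolynomial (Fin n) ℝ} {μ : Fin n →₀ ℕ} (hμ : μ ∈ p.support) :
    ∑ i, μ i ≤ p.totalDegree := by
  simpa [Finsupp.sum_fintype] using le_totalDegree hμ

lemma coeff_eq_zero_of_totalDegree_lt {p : MvPolynomial (Fin n) ℝ} {k : ℕ}
    (hp : p.totalDegree ≤ k) {μ : Fin n →₀ ℕ} (hμ : k < ∑ i, μ i) : p.coeff μ = 0 :=
  notMem_support_iff.1 fun h => (sum_le_totalDegree h).not_gt (hp.trans_lt hμ)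

noncomputable def ofCoeffs (k : ℕ) (v : MIdx n k → ℝ) : MvPolynomial (Fin n) ℝ :=
  ∑ α : MIdx n k, monomial α.1 (v α)

lemma coeff_ofCoeffs {k : ℕ} (v : MIdx n k → ℝ) (α : MIdx n k) :
    (ofCoeffs k v).coeff α.1 = v α := by
  simp [ofCoeffs, coeff_sum, coeff_monomial, Subtype.val_inj]

lemma totalDegree_ofCoeffs_le {k : ℕ} (v : MIdx n k → ℝ) : (ofCoeffs k v).totalDegree ≤ k :=
  (totalDegree_finsetSum _ _).trans <| Finset.sup_le fun α _ =>
    (totalDegree_monomial_le _ _).trans <| by simpa [Finsupp.sum_fintype] using α.2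

lemma ofCoeffs_coeff {k : ℕ} {p : MvPolynomial (Fin n) ℝ} (hp : p.totalDegree ≤ k) :
    ofCoeffs k (fun α => p.coeff α.1) = p := by
  ext μ
  by_cases hμ : ∑ i, μ i ≤ k
  · exact coeff_ofCoeffs (fun α : MIdx n k => p.coeff α.1) ⟨μ, hμ⟩
  · rw [coeff_eq_zero_of_totalDegree_lt hp (not_le.1 hμ),
      coeff_eq_zero_of_totalDegree_lt (totalDegree_ofCoeffs_le _) (not_le.1 hμ)]

lemma vecPoly_add (d : ℕ) (p q : MvPolynomial (Fin n) ℝ) :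
    vecPoly d (p + q) = vecPoly d p + vecPoly d q :=
  funext fun _ => coeff_add _ _ _

lemma vecPoly_smul (d : ℕ) (c : ℝ) (p : MvPolynomial (Fin n) ℝ) :
    vecPoly d (c • p) = c • vecPoly d p :=
  funext fun _ => coeff_smul _ _ _

lemma eq_of_vecPoly_eq {d : ℕ} {p q : MvPolynomial (Fin n) ℝ} (hp : p.totalDegree ≤ 2 * d)
    (hq : q.totalDegree ≤ 2 * d) (h : vecPoly d p = vecPoly d q) : p = q := by
  rw [← ofCoeffs_coeff hp, ← ofCoeffs_coeff hq]
  exact congrArg _ h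

end Coefficients

section Riesz

variable {d : ℕ}

lemma riesz_eq_dotProduct (p : MvPolynomial (Fin n) ℝ) (y : MIdx n (2 * d) → ℝ) :
    riesz d p y = vecPoly d p ⬝ᵥ y := rfl

lemma riesz_add (p q : MvPolynomial (Fin n) ℝ) (y : MIdx n (2 * d) → ℝ) :
    riesz d (p + q) y = riesz d p y + riesz d q y := by
  simp only [riesz_eq_dotProduct, vecPoly_add, add_dotProduct]

lemma riesz_sub (p q : MvPolynomial (Fin n) ℝ) (y : MIdx n (2 * d) → ℝ) :
    riesz d (p - q) y = riesz d p y - riesz d q y := by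
  rw [eq_sub_iff_add_eq, ← riesz_add, sub_add_cancel]

lemma riesz_sum {ι : Type*} (s : Finset ι) (p : ι → MvPolynomial (Fin n) ℝ)
    (y : MIdx n (2 * d) → ℝ) : riesz d (∑ i ∈ s, p i) y = ∑ i ∈ s, riesz d (p i) y := by
  simp only [riesz, coeff_sum, Finset.sum_mul]
  exact Finset.sum_comm

lemma riesz_smul_right (p : MvPolynomial (Fin n) ℝ) (c : ℝ) (y : MIdx n (2 * d) → ℝ) :
    riesz d p (c • y) = c * riesz d p y := by
  simp only [riesz_eq_dotProduct, dotProduct_smul, smul_eq_mul]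

lemma riesz_neg_right (p : MvPolynomial (Fin n) ℝ) (y : MIdx n (2 * d) → ℝ) :
    riesz d p (-y) = -riesz d p y := by
  simp only [riesz_eq_dotProduct, dotProduct_neg]

noncomputable def tmsExt (y : MIdx n (2 * d) → ℝ) (μ : Fin n →₀ ℕ) : ℝ :=
  if h : ∑ i, μ i ≤ 2 * d then y ⟨μ, h⟩ else 0

lemma tmsExt_of_le (y : MIdx n (2 * d) → ℝ) {μ : Fin n →₀ ℕ} (h : ∑ i, μ i ≤ 2 * d) :
    tmsExt y μ = y ⟨μ, h⟩ := dif_pos h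

lemma riesz_monomial (μ : Fin n →₀ ℕ) (c : ℝ) (y : MIdx n (2 * d) → ℝ) :
    riesz d (monomial μ c) y = c * tmsExt y μ := by
  by_cases h : ∑ i, μ i ≤ 2 * d
  · rw [riesz, Finset.sum_eq_single ⟨μ, h⟩ (fun β _ hβ => ?_) (by simp), tmsExt_of_le y h,
      coeff_monomial, if_pos rfl]
    rw [coeff_monomial, if_neg fun e => hβ (Subtype.ext e.symm), zero_mul]
  · rw [tmsExt, dif_neg h, mul_zero]
    exact Finset.sum_eq_zero fun α _ => by
      rw [coeff_monomial, if_neg fun e : μ = α.1 => h (e ▸ α.2), zero_mul]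

lemma riesz_C (c : ℝ) (y : MIdx n (2 * d) → ℝ) :
    riesz d (C c) y = c * y ⟨0, by simp⟩ := by
  rw [← monomial_zero', riesz_monomial, tmsExt_of_le y (by simp)]

lemma momMat_apply (y : MIdx n (2 * d) → ℝ) (α β : MIdx n d) :
    momMat d y α β = tmsExt y (α.1 + β.1) :=
  (tmsExt_of_le y (by have := α.2; have := β.2; rw [sum_add_apply]; omega)).symm

lemma sum_add_add_le {p : MvPolynomial (Fin n) ℝ} (hp : p.totalDegree ≤ 2 * d)
    {γ : Fin n →₀ ℕ} (hγ : γ ∈ p.support) (α β : MIdx n (d - (p.totalDegree + 1) / 2)) :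
    ∑ i, (α.1 + β.1 + γ) i ≤ 2 * d := by
  have := α.2; have := β.2; have := sum_le_totalDegree hγ
  rw [sum_add_apply, sum_add_apply]
  omega

lemma locMat_apply (p : MvPolynomial (Fin n) ℝ) (hp : p.totalDegree ≤ 2 * d)
    (y : MIdx n (2 * d) → ℝ) (α β : MIdx n (d - (p.totalDegree + 1) / 2)) :
    locMat d p hp y α β = ∑ γ ∈ p.support, p.coeff γ * tmsExt y (α.1 + β.1 + γ) := by
  rw [locMat, ← Finset.sum_attach p.support]
  exact Finset.sum_congr rfl fun γ _ => by rw [tmsExt_of_le y (sum_add_add_le hp γ.2 α β)]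

lemma momMat_isHermitian (y : MIdx n (2 * d) → ℝ) : (momMat d y).IsHermitian :=
  Matrix.isHermitian_iff_isSymm.2 <| Matrix.IsSymm.ext fun α β => by
    rw [momMat_apply, momMat_apply, add_comm]

lemma locMat_isHermitian (p : MvPolynomial (Fin n) ℝ) (hp : p.totalDegree ≤ 2 * d)
    (y : MIdx n (2 * d) → ℝ) : (locMat d p hp y).IsHermitian :=
  Matrix.isHermitian_iff_isSymm.2 <| Matrix.IsSymm.ext fun α β => by
    simp only [locMat_apply, add_comm α.1 β.1]

lemma locMat_smul (p : MvPolynomial (Fin n) ℝ) (hp : p.totalDegree ≤ 2 * d) (c : ℝ)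
    (y : MIdx n (2 * d) → ℝ) : locMat d p hp (c • y) = c • locMat d p hp y := by
  ext α β
  simp only [locMat, Pi.smul_apply, Matrix.smul_apply, smul_eq_mul, Finset.mul_sum]
  exact Finset.sum_congr rfl fun _ _ => mul_left_comm _ _ _

end Riesz

lemma Matrix.posSemidef_iff_dotProduct_mulVec_real {I : Type*} [Fintype I]
    {M : Matrix I I ℝ} : M.PosSemidef ↔ M.IsHermitian ∧ ∀ v, 0 ≤ v ⬝ᵥ (M *ᵥ v) := by
  simpa using Matrix.posSemidef_iff_dotProduct_mulVec (M := M)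

section QuadraticForms

variable {d : ℕ}

lemma riesz_mul_eq_dotProduct {a b : MvPolynomial (Fin n) ℝ} (ha : a.totalDegree ≤ d)
    (hb : b.totalDegree ≤ d) (y : MIdx n (2 * d) → ℝ) :
    riesz d (a * b) y = (fun α : MIdx n d => a.coeff α.1) ⬝ᵥ
      (momMat d y *ᵥ fun β => b.coeff β.1) := by
  conv_lhs => rw [← ofCoeffs_coeff ha, ← ofCoeffs_coeff hb, ofCoeffs, ofCoeffs,
    Finset.sum_mul_sum]
  simp only [riesz_sum, monomial_mul, riesz_monomial, ← momMat_apply, dotProduct,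
    Matrix.mulVec, Finset.mul_sum]
  exact Finset.sum_congr rfl fun α _ => Finset.sum_congr rfl fun β _ => by ring

lemma riesz_mul_monomial (p : MvPolynomial (Fin n) ℝ) (μ : Fin n →₀ ℕ) (c : ℝ)
    (y : MIdx n (2 * d) → ℝ) :
    riesz d (p * monomial μ c) y = ∑ γ ∈ p.support, c * p.coeff γ * tmsExt y (μ + γ) := by
  conv_lhs => rw [as_sum p, Finset.sum_mul]
  simp only [riesz_sum, monomial_mul, riesz_monomial, add_comm _ μ, mul_comm (p.coeff _)]

lemma riesz_mul_mul_eq_dotProduct (p : MvPolynomial (Fin n) ℝ) (hp : p.totalDegree ≤ 2 * d)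
    {a b : MvPolynomial (Fin n) ℝ} (ha : a.totalDegree ≤ d - (p.totalDegree + 1) / 2)
    (hb : b.totalDegree ≤ d - (p.totalDegree + 1) / 2) (y : MIdx n (2 * d) → ℝ) :
    riesz d (p * (a * b)) y = (fun α : MIdx n _ => a.coeff α.1) ⬝ᵥ
      (locMat d p hp y *ᵥ fun β => b.coeff β.1) := by
  conv_lhs => rw [← ofCoeffs_coeff ha, ← ofCoeffs_coeff hb, ofCoeffs, ofCoeffs,
    Finset.sum_mul_sum, Finset.mul_sum]
  simp only [Finset.mul_sum, riesz_sum, monomial_mul, riesz_mul_monomial, locMat_apply,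
    dotProduct, Matrix.mulVec, Finset.sum_mul]
  exact Finset.sum_congr rfl fun α _ => Finset.sum_congr rfl fun β _ =>
    Finset.sum_congr rfl fun γ _ => by ring

end QuadraticForms

section TmsNorm

variable {k : ℕ}

lemma tmsNorm_eq_norm (y : MIdx n k → ℝ) : tmsNorm y = ‖WithLp.toLp 2 y‖ := by
  simp [tmsNorm, EuclideanSpace.norm_eq, Real.norm_eq_abs, sq_abs]

lemma tmsNorm_nonneg (y : MIdx n k → ℝ) : 0 ≤ tmsNorm y := Real.sqrt_nonneg _

lemma tmsNorm_smul {c : ℝ} (hc : 0 ≤ c) (y : MIdx n k → ℝ) :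
    tmsNorm (c • y) = c * tmsNorm y := by
  rw [tmsNorm_eq_norm, tmsNorm_eq_norm, WithLp.toLp_smul, norm_smul, Real.norm_of_nonneg hc]

lemma tmsNorm_neg (y : MIdx n k → ℝ) : tmsNorm (-y) = tmsNorm y := by
  rw [tmsNorm_eq_norm, tmsNorm_eq_norm, WithLp.toLp_neg, norm_neg]

lemma tmsNorm_add_le (v w : MIdx n k → ℝ) : tmsNorm (v + w) ≤ tmsNorm v + tmsNorm w := by
  simpa only [tmsNorm_eq_norm, WithLp.toLp_add] using norm_add_le _ _

lemma dotProduct_self_eq_tmsNorm_sq (y : MIdx n k → ℝ) : y ⬝ᵥ y = tmsNorm y ^ 2 := by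
  rw [tmsNorm, Real.sq_sqrt (Finset.sum_nonneg fun _ _ => sq_nonneg _)]
  simp only [dotProduct, sq]

lemma abs_dotProduct_le (v w : MIdx n k → ℝ) : |v ⬝ᵥ w| ≤ tmsNorm v * tmsNorm w := by
  have h : inner ℝ (WithLp.toLp 2 w) (WithLp.toLp 2 v) = v ⬝ᵥ w := by
    simp [dotProduct, PiLp.inner_apply]
  rw [← h, tmsNorm_eq_norm, tmsNorm_eq_norm, mul_comm]
  exact abs_real_inner_le_norm _ _

lemma continuous_tmsNorm : Continuous (tmsNorm : (MIdx n k → ℝ) → ℝ) := by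
  rw [funext tmsNorm_eq_norm]
  exact continuous_norm.comp (PiLp.continuous_toLp 2 _)

lemma isCompact_setOf_tmsNorm_le (R : ℝ) : IsCompact {y : MIdx n k → ℝ | tmsNorm y ≤ R} := by
  have h : {y : MIdx n k → ℝ | tmsNorm y ≤ R} =
      WithLp.ofLp '' Metric.closedBall (0 : EuclideanSpace ℝ (MIdx n k)) R := by
    ext y
    simp only [Set.mem_image, mem_closedBall_zero_iff]
    exact ⟨fun hy => ⟨_, (tmsNorm_eq_norm y).symm.trans_le hy, rfl⟩,
      by rintro ⟨x, hx, rfl⟩; exact (tmsNorm_eq_norm _).trans_le hx⟩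
  rw [h]
  exact (isCompact_closedBall _ _).image (PiLp.continuous_ofLp 2 _)

lemma convex_setOf_tmsNorm_le (R : ℝ) : Convex ℝ {y : MIdx n k → ℝ | tmsNorm y ≤ R} := by
  intro v hv w hw a b ha hb hab
  calc tmsNorm (a • v + b • w) ≤ a * tmsNorm v + b * tmsNorm w := by
        simpa only [tmsNorm_smul ha, tmsNorm_smul hb] using tmsNorm_add_le (a • v) (b • w)
    _ ≤ a * R + b * R := by gcongr <;> assumption
    _ = R := by rw [← add_mul, hab, one_mul]

end TmsNorm

lemma Matrix.isClosed_setOf_posSemidef {I : Type*} [Fintype I] :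
    IsClosed {M : Matrix I I ℝ | M.PosSemidef} := by
  simp only [Matrix.posSemidef_iff_dotProduct_mulVec_real, Set.ofPred_and, Set.ofPred_forall]
  exact (isClosed_eq continuous_id.matrix_conjTranspose continuous_id).inter <|
    isClosed_iInter fun v => isClosed_le continuous_const <|
      continuous_const.dotProduct (continuous_id.matrix_mulVec continuous_const)

section QuadraticModule

variable {m d : ℕ} {g : Fin m → MvPolynomial (Fin n) ℝ}

lemma isSOSDeg_zero {k : ℕ} : IsSOSDeg k (0 : MvPolynomial (Fin n) ℝ) :=
  ⟨0, fun _ => 0, fun j => j.elim0, by simp⟩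

lemma isSOSDeg_sq {k : ℕ} {s : MvPolynomial (Fin n) ℝ} (hs : s.totalDegree ≤ k) :
    IsSOSDeg k (s ^ 2) :=
  ⟨1, fun _ => s, fun _ => hs, by simp⟩

lemma isSOSDeg_sum_sq {k : ℕ} {ι : Type*} [Fintype ι] (s : ι → MvPolynomial (Fin n) ℝ)
    (hs : ∀ j, (s j).totalDegree ≤ k) : IsSOSDeg k (∑ j, s j ^ 2) :=
  ⟨Fintype.card ι, s ∘ (Fintype.equivFin ι).symm, fun _ => hs _,
    (Equiv.sum_comp (Fintype.equivFin ι).symm (fun j => s j ^ 2)).symm⟩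

lemma memQ_sq {s : MvPolynomial (Fin n) ℝ} (hs : s.totalDegree ≤ d) : memQ d g (s ^ 2) :=
  ⟨s ^ 2, 0, isSOSDeg_sq hs, fun _ => isSOSDeg_zero, by simp⟩

lemma memQ_mul_sq (i : Fin m) {s : MvPolynomial (Fin n) ℝ}
    (hs : s.totalDegree ≤ d - ((g i).totalDegree + 1) / 2) : memQ d g (g i * s ^ 2) := by
  refine ⟨0, Pi.single i (s ^ 2), isSOSDeg_zero, fun j => ?_, by simp [Pi.single_apply]⟩
  rcases eq_or_ne j i with rfl | hj
  · simpa using isSOSDeg_sq hs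
  · simpa [hj] using isSOSDeg_zero

variable {y : MIdx n (2 * d) → ℝ}

lemma riesz_nonneg_of_isSOSDeg (hM : (momMat d y).PosSemidef) {σ : MvPolynomial (Fin n) ℝ}
    (hσ : IsSOSDeg d σ) : 0 ≤ riesz d σ y := by
  obtain ⟨r, s, hs, rfl⟩ := hσ
  rw [riesz_sum]
  refine Finset.sum_nonneg fun j _ => ?_
  rw [sq, riesz_mul_eq_dotProduct (hs j) (hs j)]
  exact (Matrix.posSemidef_iff_dotProduct_mulVec_real.1 hM).2 _

lemma riesz_mul_nonneg_of_isSOSDeg {p : MvPolynomial (Fin n) ℝ} (hp : p.totalDegree ≤ 2 * d)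
    (hL : (locMat d p hp y).PosSemidef) {σ : MvPolynomial (Fin n) ℝ}
    (hσ : IsSOSDeg (d - (p.totalDegree + 1) / 2) σ) : 0 ≤ riesz d (p * σ) y := by
  obtain ⟨r, s, hs, rfl⟩ := hσ
  rw [Finset.mul_sum, riesz_sum]
  refine Finset.sum_nonneg fun j _ => ?_
  rw [sq, riesz_mul_mul_eq_dotProduct p hp (hs j) (hs j)]
  exact (Matrix.posSemidef_iff_dotProduct_mulVec_real.1 hL).2 _

lemma riesz_nonneg_of_memQ (hg : ∀ i, (g i).totalDegree ≤ 2 * d)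
    (hM : (momMat d y).PosSemidef) (hL : ∀ i, (locMat d (g i) (hg i) y).PosSemidef)
    {q : MvPolynomial (Fin n) ℝ} (hq : memQ d g q) : 0 ≤ riesz d q y := by
  obtain ⟨σ₀, σ, h₀, hσ, rfl⟩ := hq
  rw [riesz_add, riesz_sum]
  exact add_nonneg (riesz_nonneg_of_isSOSDeg hM h₀)
    (Finset.sum_nonneg fun i _ => riesz_mul_nonneg_of_isSOSDeg (hg i) (hL i) (hσ i))

lemma posSemidef_of_riesz_nonneg (hg : ∀ i, (g i).totalDegree ≤ 2 * d)
    (h : ∀ q, memQ d g q → 0 ≤ riesz d q y) :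
    (momMat d y).PosSemidef ∧ ∀ i, (locMat d (g i) (hg i) y).PosSemidef := by
  refine ⟨Matrix.posSemidef_iff_dotProduct_mulVec_real.2 ⟨momMat_isHermitian y, fun v => ?_⟩,
    fun i => Matrix.posSemidef_iff_dotProduct_mulVec_real.2 ⟨locMat_isHermitian _ _ y, fun v => ?_⟩⟩
  · have hv := totalDegree_ofCoeffs_le v
    simpa only [sq, riesz_mul_eq_dotProduct hv hv, coeff_ofCoeffs] using h _ (memQ_sq hv)
  · have hv := totalDegree_ofCoeffs_le v
    simpa only [sq, riesz_mul_mul_eq_dotProduct _ (hg i) hv hv, coeff_ofCoeffs] using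
      h _ (memQ_mul_sq i hv)

end QuadraticModule

section MomentRelaxation

variable {m d : ℕ} {g : Fin m → MvPolynomial (Fin n) ℝ}

def IsMomentFeasible (d : ℕ) (g : Fin m → MvPolynomial (Fin n) ℝ)
    (hg : ∀ i, (g i).totalDegree ≤ 2 * d) (y : MIdx n (2 * d) → ℝ) : Prop :=
  y ⟨0, by simp⟩ = 1 ∧ (momMat d y).PosSemidef ∧ ∀ i, (locMat d (g i) (hg i) y).PosSemidef

lemma isClosed_setOf_isMomentFeasible (hg : ∀ i, (g i).totalDegree ≤ 2 * d) :
    IsClosed {y | IsMomentFeasible d g hg y} := by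
  simp only [IsMomentFeasible, Set.ofPred_and, Set.ofPred_forall]
  refine (isClosed_eq (continuous_apply _) continuous_const).inter <|
    (Matrix.isClosed_setOf_posSemidef.preimage ?_).inter <|
      isClosed_iInter fun i => Matrix.isClosed_setOf_posSemidef.preimage ?_
  · exact continuous_matrix fun _ _ => continuous_apply _
  · exact continuous_matrix fun _ _ =>
      continuous_finsetSum _ fun _ _ => continuous_const.mul (continuous_apply _)

lemma monVec_add_apply (x : Fin n → ℝ) {k : ℕ} (α β : MIdx n k) {h} :
    monVec (2 * k) x ⟨α.1 + β.1, h⟩ = monVec k x α * monVec k x β := by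
  simp only [monVec, Finsupp.coe_add, Pi.add_apply, pow_add, Finset.prod_mul_distrib]

lemma momMat_monVec (x : Fin n → ℝ) :
    momMat d (monVec (2 * d) x) = Matrix.vecMulVec (monVec d x) (monVec d x) :=
  Matrix.ext fun α β => monVec_add_apply x α β

lemma locMat_monVec (p : MvPolynomial (Fin n) ℝ) (hp : p.totalDegree ≤ 2 * d)
    (x : Fin n → ℝ) :
    locMat d p hp (monVec (2 * d) x) =
      eval x p • Matrix.vecMulVec (monVec _ x) (monVec _ x) := by
  ext α β
  rw [locMat_apply, eval_eq', Matrix.smul_apply, smul_eq_mul, Finset.sum_mul]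
  refine Finset.sum_congr rfl fun γ hγ => ?_
  rw [tmsExt_of_le _ (sum_add_add_le hp hγ α β)]
  simp only [monVec, Matrix.vecMulVec_apply, Finsupp.coe_add, Pi.add_apply, pow_add,
    Finset.prod_mul_distrib]
  ring

lemma isMomentFeasible_monVec (hg : ∀ i, (g i).totalDegree ≤ 2 * d) {x : Fin n → ℝ}
    (hx : ∀ i, 0 ≤ eval x (g i)) : IsMomentFeasible d g hg (monVec (2 * d) x) := by
  have hpsd : ∀ {k : ℕ}, (Matrix.vecMulVec (monVec k x) (monVec k x)).PosSemidef := fun {k} => by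
    simpa using Matrix.posSemidef_vecMulVec_self_star (monVec k x)
  refine ⟨by simp [monVec], momMat_monVec x ▸ hpsd, fun i => ?_⟩
  rw [locMat_monVec]
  exact hpsd.smul (hx i)

lemma le_riesz_add_of_memQ {hg : ∀ i, (g i).totalDegree ≤ 2 * d} {y : MIdx n (2 * d) → ℝ}
    (hy : IsMomentFeasible d g hg y) {f p : MvPolynomial (Fin n) ℝ} {γ ε : ℝ}
    (hp : tmsNorm (vecPoly d p) ≤ ε) (hq : memQ d g (f - p - C γ)) :
    γ ≤ riesz d f y + ε * tmsNorm y := by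
  have hQ := riesz_nonneg_of_memQ hg hy.2.1 hy.2.2 hq
  rw [riesz_sub, riesz_sub, riesz_C, hy.1, mul_one] at hQ
  have hCS : -(ε * tmsNorm y) ≤ riesz d p y :=
    (neg_le_neg <| (abs_dotProduct_le _ _).trans <|
      mul_le_mul_of_nonneg_right hp (tmsNorm_nonneg y)).trans (neg_abs_le _)
  linarith

/-- Coercivity: `⟨θ, y⟩ ≥ 0`, and Cauchy–Schwarz for `⟨f - θ, y⟩`. -/
lemma sub_mul_tmsNorm_le_riesz_add {θ : MvPolynomial (Fin n) ℝ} (hθ : IsSOSDeg d θ)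
    (f : MvPolynomial (Fin n) ℝ) (ε : ℝ) {y : MIdx n (2 * d) → ℝ}
    (hM : (momMat d y).PosSemidef) :
    (ε - tmsNorm (vecPoly d (f - θ))) * tmsNorm y ≤ riesz d f y + ε * tmsNorm y := by
  have hθy := riesz_nonneg_of_isSOSDeg hM hθ
  have hCS := (neg_le_neg (abs_dotProduct_le (vecPoly d (f - θ)) y)).trans (neg_abs_le _)
  rw [← riesz_eq_dotProduct, riesz_sub] at hCS
  rw [sub_mul]
  linarith

lemma isSOSDeg_sum_monomial_add_self :
    IsSOSDeg d (∑ α : MIdx n d, monomial (α.1 + α.1) (1 : ℝ)) := by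
  have h : ∑ α : MIdx n d, monomial (α.1 + α.1) (1 : ℝ) = ∑ α : MIdx n d, monomial α.1 1 ^ 2 :=
    Finset.sum_congr rfl fun α _ => by rw [sq, monomial_mul, one_mul]
  exact h ▸ isSOSDeg_sum_sq _ fun α =>
    (totalDegree_monomial_le _ _).trans <| by simpa [Finsupp.sum_fintype] using α.2

lemma exists_isMinOn_of_coercive {k : ℕ} {F : Set (MIdx n k → ℝ)} (hF : IsClosed F)
    {y₀ : MIdx n k → ℝ} (hy₀ : y₀ ∈ F) {φ : (MIdx n k → ℝ) → ℝ} (hφ : Continuous φ)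
    {c : ℝ} (hc : 0 < c) (hcoer : ∀ y ∈ F, c * tmsNorm y ≤ φ y) : ∃ y ∈ F, IsMinOn φ F y := by
  refine hφ.continuousOn.exists_isMinOn' hF hy₀ <| Filter.eventually_inf_principal.2 <|
    Filter.mem_cocompact.2 ⟨_, isCompact_setOf_tmsNorm_le (φ y₀ / c), fun y hy hyF => ?_⟩
  have hy : φ y₀ < c * tmsNorm y := (div_lt_iff₀' hc).1 (not_le.1 hy)
  linarith [hcoer y hyF]

theorem exists_isMinOn_momentRelaxation (hg : ∀ i, (g i).totalDegree ≤ 2 * d)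
    {f θ : MvPolynomial (Fin n) ℝ} (hθ : IsSOSDeg d θ) {ε : ℝ}
    (hε : tmsNorm (vecPoly d (f - θ)) < ε) {x : Fin n → ℝ} (hx : ∀ i, 0 ≤ eval x (g i)) :
    ∃ y ∈ {y | IsMomentFeasible d g hg y},
      IsMinOn (fun y => riesz d f y + ε * tmsNorm y) {y | IsMomentFeasible d g hg y} y :=
  exists_isMinOn_of_coercive (isClosed_setOf_isMomentFeasible hg)
    (isMomentFeasible_monVec hg hx)
    ((continuous_const.dotProduct continuous_id).add (continuous_const.mul continuous_tmsNorm))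
    (sub_pos.2 hε) fun _ hy => sub_mul_tmsNorm_le_riesz_add hθ f ε hy.2.1

end MomentRelaxation

lemma MvPolynomial.eq_zero_of_eval_eq_zero_on_open {p : MvPolynomial (Fin n) ℝ}
    {U : Set (Fin n → ℝ)} (hU : IsOpen U) (hne : U.Nonempty) (h : ∀ x ∈ U, eval x p = 0) :
    p = 0 := by
  obtain ⟨a, ha⟩ := hne
  refine funext fun x => ?_
  simpa using (AnalyticOnNhd.eval_mvPolynomial p).eqOn_zero_of_preconnected_of_eventuallyEq_zero
    isPreconnected_univ (Set.mem_univ a) (Filter.eventually_of_mem (hU.mem_nhds ha) h)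
    (Set.mem_univ x)

lemma MvPolynomial.eq_zero_of_sum_sq_eq_zero {ι : Type*} [Fintype ι]
    {s : ι → MvPolynomial (Fin n) ℝ} (h : ∑ j, s j ^ 2 = 0) (j : ι) : s j = 0 := by
  refine funext fun x => ?_
  have hx := congrArg (eval x) h
  simp only [map_sum, map_pow, map_zero] at hx
  simpa using (Finset.sum_eq_zero_iff_of_nonneg fun j _ => sq_nonneg (eval x (s j))).1 hx j
    (Finset.mem_univ j)

section Gram

variable {k : ℕ}

noncomputable def gramPoly (k : ℕ) (M : Matrix (MIdx n k) (MIdx n k) ℝ) :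
    MvPolynomial (Fin n) ℝ :=
  ∑ α, ∑ β, monomial (α.1 + β.1) (M α β)

lemma totalDegree_gramPoly_le (M : Matrix (MIdx n k) (MIdx n k) ℝ) :
    (gramPoly k M).totalDegree ≤ 2 * k :=
  (totalDegree_finsetSum _ _).trans <| Finset.sup_le fun α _ =>
    (totalDegree_finsetSum _ _).trans <| Finset.sup_le fun β _ =>
      (totalDegree_monomial_le _ _).trans <| by
        have := α.2; have := β.2
        simp only [Finsupp.sum_fintype, id, sum_add_apply, implies_true]
        omega

lemma eval_gramPoly (M : Matrix (MIdx n k) (MIdx n k) ℝ) (x : Fin n → ℝ) :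
    eval x (gramPoly k M) = monVec k x ⬝ᵥ (M *ᵥ monVec k x) := by
  simp only [gramPoly, map_sum, eval_monomial, Finsupp.prod_fintype _ _ (fun i => pow_zero _),
    Finsupp.coe_add, Pi.add_apply, pow_add, Finset.prod_mul_distrib, dotProduct,
    Matrix.mulVec, Finset.mul_sum, monVec]
  exact Finset.sum_congr rfl fun α _ => Finset.sum_congr rfl fun β _ => by ring

lemma eval_gramPoly_nonneg {M : Matrix (MIdx n k) (MIdx n k) ℝ} (hM : M.PosSemidef)
    (x : Fin n → ℝ) : 0 ≤ eval x (gramPoly k M) :=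
  eval_gramPoly M x ▸ (Matrix.posSemidef_iff_dotProduct_mulVec_real.1 hM).2 _

lemma gramPoly_add (M N : Matrix (MIdx n k) (MIdx n k) ℝ) :
    gramPoly k (M + N) = gramPoly k M + gramPoly k N := by
  simp only [gramPoly, Matrix.add_apply, map_add, Finset.sum_add_distrib]

lemma gramPoly_smul (c : ℝ) (M : Matrix (MIdx n k) (MIdx n k) ℝ) :
    gramPoly k (c • M) = c • gramPoly k M := by
  simp only [gramPoly, Matrix.smul_apply, smul_monomial, Finset.smul_sum]

lemma gramPoly_sum_vecMulVec {r : ℕ} (v : Fin r → MIdx n k → ℝ) :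
    gramPoly k (∑ j, Matrix.vecMulVec (v j) (v j)) = ∑ j, ofCoeffs k (v j) ^ 2 := by
  simp only [gramPoly, ofCoeffs, sq, Finset.sum_mul_sum, monomial_mul, Matrix.sum_apply,
    Matrix.vecMulVec_apply, map_sum]
  conv_rhs => rw [Finset.sum_comm]
  exact Finset.sum_congr rfl fun α _ => Finset.sum_comm

lemma isSOSDeg_iff_exists_gramPoly {σ : MvPolynomial (Fin n) ℝ} :
    IsSOSDeg k σ ↔ ∃ M, M.PosSemidef ∧ gramPoly k M = σ := by
  constructor
  · rintro ⟨r, s, hs, rfl⟩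
    refine ⟨∑ j, Matrix.vecMulVec (fun α => (s j).coeff α.1) (fun α => (s j).coeff α.1),
      Matrix.posSemidef_iff_eq_sum_vecMulVec.2 ⟨r, fun j α => (s j).coeff α.1, by simp⟩, ?_⟩
    rw [gramPoly_sum_vecMulVec]
    simp only [ofCoeffs_coeff (hs _)]
  · rintro ⟨M, hM, rfl⟩
    obtain ⟨r, v, rfl⟩ := Matrix.posSemidef_iff_eq_sum_vecMulVec.1 hM
    simp only [star_trivial, gramPoly_sum_vecMulVec]
    exact ⟨r, _, fun j => totalDegree_ofCoeffs_le _, rfl⟩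

lemma eq_zero_of_gramPoly_eq_zero {M : Matrix (MIdx n k) (MIdx n k) ℝ} (hM : M.PosSemidef)
    (h : gramPoly k M = 0) : M = 0 := by
  obtain ⟨r, v, rfl⟩ := Matrix.posSemidef_iff_eq_sum_vecMulVec.1 hM
  simp only [star_trivial, gramPoly_sum_vecMulVec] at h ⊢
  have hv : ∀ j, v j = 0 := fun j => funext fun α => by
    simpa [coeff_ofCoeffs] using congrArg (coeff α.1) (eq_zero_of_sum_sq_eq_zero h j)
  simp [hv]

end Gram

section GramTuple

variable {m d : ℕ}

/-- Gram matrices of the multipliers `σ₀, σ₁, …, σ_m` of an element of `Q(g)_{2d}`, stored as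
plain functions rather than `Matrix` so that the tuple space carries a norm. -/
abbrev GramTuple (d : ℕ) (g : Fin m → MvPolynomial (Fin n) ℝ) : Type :=
  (MIdx n d → MIdx n d → ℝ) ×
    ((i : Fin m) → MIdx n (d - ((g i).totalDegree + 1) / 2) →
      MIdx n (d - ((g i).totalDegree + 1) / 2) → ℝ)

variable {g : Fin m → MvPolynomial (Fin n) ℝ}

def gramCone (d : ℕ) (g : Fin m → MvPolynomial (Fin n) ℝ) : Set (GramTuple d g) :=
  {X | (Matrix.of X.1).PosSemidef ∧ ∀ i, (Matrix.of (X.2 i)).PosSemidef}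

noncomputable def qmodPoly (d : ℕ) (g : Fin m → MvPolynomial (Fin n) ℝ) (X : GramTuple d g) :
    MvPolynomial (Fin n) ℝ :=
  gramPoly d (Matrix.of X.1) + ∑ i, g i * gramPoly _ (Matrix.of (X.2 i))

lemma qmodPoly_add (X Y : GramTuple d g) :
    qmodPoly d g (X + Y) = qmodPoly d g X + qmodPoly d g Y := by
  simp only [qmodPoly, Prod.fst_add, Prod.snd_add, Pi.add_apply, ← Matrix.of_add_of,
    gramPoly_add, mul_add, Finset.sum_add_distrib]
  abel

lemma qmodPoly_smul (c : ℝ) (X : GramTuple d g) :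
    qmodPoly d g (c • X) = c • qmodPoly d g X := by
  simp only [qmodPoly, Prod.smul_fst, Prod.smul_snd, Pi.smul_apply, ← Matrix.smul_of,
    gramPoly_smul, mul_smul_comm, smul_add, Finset.smul_sum]

noncomputable def qmodCoeffs (d : ℕ) (g : Fin m → MvPolynomial (Fin n) ℝ) :
    GramTuple d g →ₗ[ℝ] (MIdx n (2 * d) → ℝ) where
  toFun X := vecPoly d (qmodPoly d g X)
  map_add' X Y := by rw [qmodPoly_add, vecPoly_add]
  map_smul' c X := by rw [qmodPoly_smul, vecPoly_smul, RingHom.id_apply]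

lemma totalDegree_qmodPoly_le (hg : ∀ i, (g i).totalDegree ≤ 2 * d) (X : GramTuple d g) :
    (qmodPoly d g X).totalDegree ≤ 2 * d := by
  refine (totalDegree_add _ _).trans <| max_le (totalDegree_gramPoly_le _) <|
    (totalDegree_finsetSum _ _).trans <| Finset.sup_le fun i _ => (totalDegree_mul _ _).trans ?_
  have := totalDegree_gramPoly_le (Matrix.of (X.2 i))
  have := hg i
  omega

lemma memQ_iff_exists_qmodPoly {q : MvPolynomial (Fin n) ℝ} :
    memQ d g q ↔ ∃ X ∈ gramCone d g, qmodPoly d g X = q := by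
  constructor
  · rintro ⟨σ₀, σ, h₀, hσ, rfl⟩
    obtain ⟨M₀, hM₀, rfl⟩ := isSOSDeg_iff_exists_gramPoly.1 h₀
    choose M hM hMσ using fun i => isSOSDeg_iff_exists_gramPoly.1 (hσ i)
    exact ⟨(M₀, M), ⟨hM₀, hM⟩, by simp only [qmodPoly, ← hMσ]; rfl⟩
  · rintro ⟨X, hX, rfl⟩
    exact ⟨_, _, isSOSDeg_iff_exists_gramPoly.2 ⟨_, hX.1, rfl⟩,
      fun i => isSOSDeg_iff_exists_gramPoly.2 ⟨_, hX.2 i, rfl⟩, rfl⟩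

lemma smul_mem_gramCone {c : ℝ} (hc : 0 ≤ c) {X : GramTuple d g} (hX : X ∈ gramCone d g) :
    c • X ∈ gramCone d g :=
  ⟨hX.1.smul hc, fun i => (hX.2 i).smul hc⟩

lemma convex_gramCone : Convex ℝ (gramCone d g) :=
  fun _ hX _ hY _ _ ha hb _ =>
    ⟨((hX.1.smul ha).add (hY.1.smul hb)), fun i => ((hX.2 i).smul ha).add ((hY.2 i).smul hb)⟩

lemma isClosed_gramCone : IsClosed (gramCone d g) := by
  simp only [gramCone, Set.ofPred_and, Set.ofPred_forall]
  exact (Matrix.isClosed_setOf_posSemidef.preimage (continuous_matrix fun _ _ => by fun_prop)).inter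
    <| isClosed_iInter fun i => Matrix.isClosed_setOf_posSemidef.preimage
      (f := fun X : GramTuple d g => Matrix.of (X.2 i)) (continuous_matrix fun _ _ => by fun_prop)

/-- Each summand of `qmodPoly d g X` is nonnegative on `U`; if they add up to zero they vanish
on the open set `U`, hence identically. -/
lemma eq_zero_of_qmodPoly_eq_zero (hgne : ∀ i, g i ≠ 0) {U : Set (Fin n → ℝ)} (hU : IsOpen U)
    (hUne : U.Nonempty) (hUg : ∀ x ∈ U, ∀ i, 0 ≤ eval x (g i)) {X : GramTuple d g}
    (hX : X ∈ gramCone d g) (h : qmodPoly d g X = 0) : X = 0 := by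
  have hterms : ∀ x ∈ U, eval x (gramPoly d (Matrix.of X.1)) = 0 ∧
      ∀ i, eval x (g i * gramPoly _ (Matrix.of (X.2 i))) = 0 := by
    intro x hx
    have hsum := congrArg (eval x) h
    simp only [qmodPoly, map_add, map_sum, map_zero] at hsum
    have hi : ∀ i ∈ Finset.univ, 0 ≤ eval x (g i * gramPoly _ (Matrix.of (X.2 i))) :=
      fun i _ => (map_mul (eval x) _ _).symm ▸
        mul_nonneg (hUg x hx i) (eval_gramPoly_nonneg (hX.2 i) x)
    obtain ⟨h₀, hrest⟩ :=
      (add_eq_zero_iff_of_nonneg (eval_gramPoly_nonneg hX.1 x) (Finset.sum_nonneg hi)).1 hsum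
    exact ⟨h₀, fun i => (Finset.sum_eq_zero_iff_of_nonneg hi).1 hrest i (Finset.mem_univ i)⟩
  refine Prod.ext (eq_zero_of_gramPoly_eq_zero hX.1 <|
    eq_zero_of_eval_eq_zero_on_open hU hUne fun x hx => (hterms x hx).1) (funext fun i => ?_)
  have hi := eq_zero_of_eval_eq_zero_on_open hU hUne fun x hx => (hterms x hx).2 i
  exact eq_zero_of_gramPoly_eq_zero (hX.2 i) ((mul_eq_zero.1 hi).resolve_left (hgne i))

end GramTuple

section ConeImage

variable {W V : Type*} [NormedAddCommGroup W] [NormedAddCommGroup V]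

/-- By compactness of the cone's unit sphere. -/
lemma LinearMap.exists_pos_mul_norm_le_of_cone [NormedSpace ℝ W] [NormedSpace ℝ V]
    [FiniteDimensional ℝ W] (L : W →ₗ[ℝ] V)
    {C : Set W} (hC : IsClosed C) (hcone : ∀ c : ℝ, 0 ≤ c → ∀ x ∈ C, c • x ∈ C)
    (hker : ∀ x ∈ C, L x = 0 → x = 0) : ∃ μ > 0, ∀ x ∈ C, μ * ‖x‖ ≤ ‖L x‖ := by
  have := FiniteDimensional.proper ℝ W
  obtain ⟨μ, hμ, hμS⟩ := ((isCompact_sphere (0 : W) 1).inter_left hC).exists_forall_le'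
    L.continuous_of_finiteDimensional.norm.continuousOn (a := 0) fun x hx =>
      norm_pos_iff.2 fun h => by simpa [hker x hx.1 h] using hx.2
  refine ⟨μ, hμ, fun x hx => ?_⟩
  rcases eq_or_ne x 0 with rfl | hx0
  · simp
  have hn : 0 < ‖x‖ := norm_pos_iff.2 hx0
  have := hμS (‖x‖⁻¹ • x) ⟨hcone _ (inv_nonneg.2 hn.le) x hx, by simp [norm_smul, hn.ne']⟩
  rwa [map_smul, norm_smul, norm_inv, norm_norm, le_inv_mul_iff₀ hn, mul_comm] at this

lemma isClosed_image_of_mul_norm_le [ProperSpace W] {L : W → V} (hL : Continuous L)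
    {C : Set W} (hC : IsClosed C) {μ : ℝ} (hμ : 0 < μ) (h : ∀ x ∈ C, μ * ‖x‖ ≤ ‖L x‖) :
    IsClosed (L '' C) := by
  refine isClosed_of_closure_subset fun z hz => ?_
  have hS : IsClosed (L '' (C ∩ Metric.closedBall 0 ((‖z‖ + 1) / μ))) :=
    (((isCompact_closedBall _ _).inter_left hC).image hL).isClosed
  refine Set.image_mono Set.inter_subset_left (hS.closure_subset ?_)
  rw [Metric.mem_closure_iff] at hz ⊢
  intro δ hδ
  obtain ⟨_, ⟨x, hx, rfl⟩, hzx⟩ := hz (min δ 1) (lt_min hδ one_pos)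
  refine ⟨L x, ⟨x, ⟨hx, ?_⟩, rfl⟩, hzx.trans_le (min_le_left _ _)⟩
  have hLx : ‖L x‖ - ‖z‖ ≤ dist z (L x) := by
    rw [dist_comm, dist_eq_norm]
    exact norm_sub_norm_le _ _
  rw [mem_closedBall_zero_iff, le_div_iff₀ hμ, mul_comm]
  linarith [h x hx, min_le_right δ 1]

theorem LinearMap.isClosed_image_of_cone [NormedSpace ℝ W] [NormedSpace ℝ V]
    [FiniteDimensional ℝ W] (L : W →ₗ[ℝ] V) {C : Set W}
    (hC : IsClosed C) (hcone : ∀ c : ℝ, 0 ≤ c → ∀ x ∈ C, c • x ∈ C)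
    (hker : ∀ x ∈ C, L x = 0 → x = 0) : IsClosed (L '' C) :=
  have := FiniteDimensional.proper ℝ W
  let ⟨_, hμ, h⟩ := L.exists_pos_mul_norm_le_of_cone hC hcone hker
  isClosed_image_of_mul_norm_le L.continuous_of_finiteDimensional hC hμ h

end ConeImage

lemma exists_dotProduct_le_zero_of_notMem_add {k : ℕ} {C : Set (MIdx n k → ℝ)}
    (hC : IsClosed C) (hCconv : Convex ℝ C) (hcone : ∀ c : ℝ, 0 ≤ c → ∀ x ∈ C, c • x ∈ C)
    (hC0 : 0 ∈ C) {ε : ℝ} (hε : 0 ≤ ε) {x : MIdx n k → ℝ}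
    (hx : x ∉ C + {b | tmsNorm b ≤ ε}) :
    ∃ w, (∀ c ∈ C, c ⬝ᵥ w ≤ 0) ∧ ε * tmsNorm w < x ⬝ᵥ w := by
  obtain ⟨Φ, u, hΦ, hux⟩ := geometric_hahn_banach_closed_point
    (hCconv.add (convex_setOf_tmsNorm_le ε))
    (hC.add_right_of_isCompact (isCompact_setOf_tmsNorm_le ε)) hx
  set w : MIdx n k → ℝ := fun α => Φ fun β => if α = β then 1 else 0
  have hΦw : ∀ v, Φ v = v ⬝ᵥ w := fun v => by
    simpa [dotProduct] using Φ.toLinearMap.pi_apply_eq_sum_univ v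
  have hΦC : ∀ c ∈ C, ∀ b, tmsNorm b ≤ ε → c ⬝ᵥ w + b ⬝ᵥ w < u := fun c hc b hb => by
    simpa [hΦw, add_dotProduct] using hΦ _ (Set.add_mem_add hc hb)
  have hu : 0 < u := by simpa using hΦC 0 hC0 0 (by simpa [tmsNorm] using hε)
  refine ⟨w, fun c hc => not_lt.1 fun hcw => ?_, ?_⟩
  · have := hΦC ((u / (c ⬝ᵥ w)) • c) (hcone _ (by positivity) c hc) 0
      (by simpa [tmsNorm] using hε)
    simp [smul_dotProduct, hcw.ne'] at this
  · refine lt_of_le_of_lt ?_ (hux.trans_eq (hΦw x))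
    rcases eq_or_ne (tmsNorm w) 0 with hw | hw
    · simpa [hw] using hu.le
    have hb := hΦC 0 hC0 ((ε / tmsNorm w) • w) (by
      rw [tmsNorm_smul (div_nonneg hε (tmsNorm_nonneg w)), div_mul_cancel₀ _ hw])
    rw [zero_dotProduct, zero_add, smul_dotProduct, dotProduct_self_eq_tmsNorm_sq, smul_eq_mul,
      sq, ← mul_assoc, div_mul_cancel₀ _ hw] at hb
    exact hb.le

section Duality

variable {m d : ℕ} {g : Fin m → MvPolynomial (Fin n) ℝ}

/-- Rescale `z` to a feasible point when `z₀ > 0`; use coercivity when `z₀ = 0`. -/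
lemma mul_le_riesz_add_of_posSemidef (hg : ∀ i, (g i).totalDegree ≤ 2 * d)
    {f θ : MvPolynomial (Fin n) ℝ} (hθ : IsSOSDeg d θ) {ε : ℝ}
    (hε : tmsNorm (vecPoly d (f - θ)) ≤ ε) {v : ℝ}
    (hv : ∀ y, IsMomentFeasible d g hg y → v ≤ riesz d f y + ε * tmsNorm y)
    {z : MIdx n (2 * d) → ℝ} (hM : (momMat d z).PosSemidef)
    (hL : ∀ i, (locMat d (g i) (hg i) z).PosSemidef) (hz : 0 ≤ z ⟨0, by simp⟩) :
    v * z ⟨0, by simp⟩ ≤ riesz d f z + ε * tmsNorm z := by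
  rcases hz.eq_or_lt with hz | hz
  · rw [← hz, mul_zero]
    exact (mul_nonneg (sub_nonneg.2 hε) (tmsNorm_nonneg z)).trans
      (sub_mul_tmsNorm_le_riesz_add hθ f ε hM)
  have hfeas : IsMomentFeasible d g hg ((z ⟨0, by simp⟩)⁻¹ • z) :=
    ⟨inv_mul_cancel₀ hz.ne', hM.smul (inv_nonneg.2 hz.le),
      fun i => locMat_smul _ _ _ z ▸ (hL i).smul (inv_nonneg.2 hz.le)⟩
  have := hv _ hfeas
  rwa [riesz_smul_right, tmsNorm_smul (inv_nonneg.2 hz.le), mul_left_comm, ← mul_add,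
    le_inv_mul_iff₀ hz, mul_comm] at this

lemma isClosed_image_qmodCoeffs (hg : ∀ i, (g i).totalDegree ≤ 2 * d) (hgne : ∀ i, g i ≠ 0)
    {U : Set (Fin n → ℝ)} (hU : IsOpen U) (hUne : U.Nonempty)
    (hUg : ∀ x ∈ U, ∀ i, 0 ≤ eval x (g i)) : IsClosed (qmodCoeffs d g '' gramCone d g) :=
  (qmodCoeffs d g).isClosed_image_of_cone isClosed_gramCone
    (fun _ hc _ hX => smul_mem_gramCone hc hX) fun X hX h0 =>
      eq_zero_of_qmodPoly_eq_zero hgne hU hUne hUg hX <|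
        eq_of_vecPoly_eq (totalDegree_qmodPoly_le hg X) (by simp) (h0.trans (funext fun _ => by
          simp [vecPoly]))

/-- If not, a hyperplane separating `vec(f - v)` from this closed convex set yields a tms,
nonnegative on `Q(g)_{2d}`, that violates the lower bound `v`. -/
lemma vecPoly_sub_C_mem (hg : ∀ i, (g i).totalDegree ≤ 2 * d) (hgne : ∀ i, g i ≠ 0)
    {U : Set (Fin n → ℝ)} (hU : IsOpen U) (hUne : U.Nonempty)
    (hUg : ∀ x ∈ U, ∀ i, 0 ≤ eval x (g i)) {f θ : MvPolynomial (Fin n) ℝ}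
    (hθ : IsSOSDeg d θ) {ε : ℝ} (hε : tmsNorm (vecPoly d (f - θ)) ≤ ε) {v : ℝ}
    (hv : ∀ y, IsMomentFeasible d g hg y → v ≤ riesz d f y + ε * tmsNorm y) :
    vecPoly d (f - C v) ∈ qmodCoeffs d g '' gramCone d g + {b | tmsNorm b ≤ ε} := by
  by_contra hnot
  obtain ⟨w, hwQ, hwfv⟩ := exists_dotProduct_le_zero_of_notMem_add
    (isClosed_image_qmodCoeffs hg hgne hU hUne hUg) (convex_gramCone.linear_image _)
    (fun c hc _ ⟨X, hX, hXw⟩ => ⟨c • X, smul_mem_gramCone hc hX, by rw [map_smul, hXw]⟩)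
    ⟨0, ⟨Matrix.PosSemidef.zero, fun _ => Matrix.PosSemidef.zero⟩, map_zero _⟩
    ((tmsNorm_nonneg _).trans hε) hnot
  have hQ : ∀ q, memQ d g q → 0 ≤ riesz d q (-w) := fun q hq => by
    obtain ⟨X, hX, rfl⟩ := memQ_iff_exists_qmodPoly.1 hq
    rw [riesz_neg_right, neg_nonneg]
    exact hwQ _ ⟨X, hX, rfl⟩
  obtain ⟨hM, hL⟩ := posSemidef_of_riesz_nonneg hg hQ
  have hw₀ : 0 ≤ (-w) ⟨0, by simp⟩ := by
    have := hQ (C 1) (by simpa using memQ_sq (g := g) (s := 1) (by simp))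
    rwa [riesz_C, one_mul] at this
  have := mul_le_riesz_add_of_posSemidef hg hθ hε hv hM hL hw₀
  rw [← riesz_eq_dotProduct, riesz_sub, riesz_C] at hwfv
  simp only [riesz_neg_right, tmsNorm_neg, Pi.neg_apply] at this
  linarith

theorem exists_dual_optimal (hg : ∀ i, (g i).totalDegree ≤ 2 * d) (hgne : ∀ i, g i ≠ 0)
    {U : Set (Fin n → ℝ)} (hU : IsOpen U) (hUne : U.Nonempty)
    (hUg : ∀ x ∈ U, ∀ i, 0 ≤ eval x (g i)) {f θ : MvPolynomial (Fin n) ℝ}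
    (hf : f.totalDegree ≤ 2 * d) (hθ : IsSOSDeg d θ) {ε : ℝ}
    (hε : tmsNorm (vecPoly d (f - θ)) ≤ ε) {v : ℝ}
    (hv : ∀ y, IsMomentFeasible d g hg y → v ≤ riesz d f y + ε * tmsNorm y) :
    ∃ p : MvPolynomial (Fin n) ℝ, p.totalDegree ≤ 2 * d ∧ tmsNorm (vecPoly d p) ≤ ε ∧
      memQ d g (f - p - C v) := by
  obtain ⟨_, ⟨X, hX, rfl⟩, w, hw, hsum⟩ := vecPoly_sub_C_mem hg hgne hU hUne hUg hθ hε hv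
  have hvec : vecPoly d (ofCoeffs (2 * d) w) = w := funext (coeff_ofCoeffs w)
  have hdeg : (f - C v).totalDegree ≤ 2 * d :=
    (totalDegree_sub _ _).trans (max_le hf (by simp))
  have hXw : qmodPoly d g X + ofCoeffs (2 * d) w = f - C v :=
    eq_of_vecPoly_eq ((totalDegree_add _ _).trans
      (max_le (totalDegree_qmodPoly_le hg X) (totalDegree_ofCoeffs_le w))) hdeg
      (by rw [vecPoly_add, hvec]; exact hsum)
  refine ⟨ofCoeffs (2 * d) w, totalDegree_ofCoeffs_le w, hvec.symm ▸ hw,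
    memQ_iff_exists_qmodPoly.2 ⟨X, hX, ?_⟩⟩
  rw [sub_right_comm, ← hXw, add_sub_cancel_right]

end Duality

end

/-- (Theorem 2.) Let `g₁,…,g_m` be nonzero polynomials of degree ≤ 2d
with `K = {x : g₁(x) ≥ 0,…,g_m(x) ≥ 0}` having nonempty interior, and let
`deg f ≤ 2d`. If `ε > ‖vec(f − θ_d)‖` where `θ_d = Σ_{α ∈ ℕⁿ_d} x^{2α}`, then the moment
relaxation (minimize `⟨f,y⟩ + ε‖y‖` over feasible tms `y`) attains its infimum, the dual
SOS program (maximize `γ` subject to `‖vec(p)‖ ≤ ε`, `p ∈ ℝ[x]_{2d}`,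
`f − p − γ ∈ Q(g)_{2d}`) attains its supremum, and the two optimal values are equal. -/
theorem stmt17 (n m d : ℕ) (g : Fin m → MvPolynomial (Fin n) ℝ)
    (hgne : ∀ i, g i ≠ 0) (hg : ∀ i, (g i).totalDegree ≤ 2 * d)
    (K : Set (Fin n → ℝ)) (hK : K = {x | ∀ i, 0 ≤ MvPolynomial.eval x (g i)})
    (hKint : (interior K).Nonempty)
    (f : MvPolynomial (Fin n) ℝ) (hf : f.totalDegree ≤ 2 * d)
    (θ : MvPolynomial (Fin n) ℝ)
    (hθ : θ = ∑ α : MIdx n d, MvPolynomial.monomial (α.1 + α.1) (1 : ℝ))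
    (ε : ℝ) (hε : tmsNorm (vecPoly d (f - θ)) < ε) :
    ∃ (ystar : MIdx n (2 * d) → ℝ) (γstar : ℝ) (pstar : MvPolynomial (Fin n) ℝ),
      -- (i) the moment relaxation attains its infimum at `ystar`
      (ystar ⟨0, by simp⟩ = 1 ∧ (momMat d ystar).PosSemidef ∧
        ∀ i, (locMat d (g i) (hg i) ystar).PosSemidef) ∧
      (∀ y : MIdx n (2 * d) → ℝ,
        y ⟨0, by simp⟩ = 1 → (momMat d y).PosSemidef →
        (∀ i, (locMat d (g i) (hg i) y).PosSemidef) →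
        riesz d f ystar + ε * tmsNorm ystar ≤ riesz d f y + ε * tmsNorm y) ∧
      -- (ii) the dual SOS program attains its supremum at `(γstar, pstar)`
      (pstar.totalDegree ≤ 2 * d ∧ tmsNorm (vecPoly d pstar) ≤ ε ∧
        memQ d g (f - pstar - MvPolynomial.C γstar)) ∧
      (∀ (γ : ℝ) (p : MvPolynomial (Fin n) ℝ), p.totalDegree ≤ 2 * d →
        tmsNorm (vecPoly d p) ≤ ε → memQ d g (f - p - MvPolynomial.C γ) →
        γ ≤ γstar) ∧
      -- (iii) the two optimal values are equal
      riesz d f ystar + ε * tmsNorm ystar = γstar := by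
  have hKg : ∀ x ∈ interior K, ∀ i, 0 ≤ eval x (g i) := fun x hx => by
    simpa [hK] using interior_subset hx
  have hθ' : IsSOSDeg d θ := hθ ▸ isSOSDeg_sum_monomial_add_self
  obtain ⟨x₀, hx₀⟩ := hKint
  obtain ⟨ystar, hfeas, hmin⟩ := exists_isMinOn_momentRelaxation hg hθ' hε (hKg x₀ hx₀)
  obtain ⟨pstar, hpdeg, hpnorm, hpQ⟩ := exists_dual_optimal hg hgne isOpen_interior ⟨x₀, hx₀⟩
    hKg hf hθ' hε.le fun y hy => hmin hy
  exact ⟨ystar, _, pstar, hfeas, fun y h₀ hM hL => hmin ⟨h₀, hM, hL⟩, ⟨hpdeg, hpnorm, hpQ⟩,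
    fun γ p _ hp hq => le_riesz_add_of_memQ hfeas hp hq, rfl⟩
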